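/- Let Q be the transition rate matrix of an irreducible CTMC on a countable state space admitting a norm-like Foster-Lyapunov function V ≥ 1 with ℚV ≤ C₁ − C₂V. Let (E_n) be an increasing sequence of finite subsets covering the state space, fix a designated state x_ℓ ∈ E₁, and let Q̄_n be obtained from the restriction of Q to E_n by redirecting outgoing transitions to x_ℓ. Then the unique stationary distribution π̄_n of Q̄_n converges to the stationary distribution π of Q in ℓ¹: lim_{n→∞} ‖π − π̄_n‖_{ℓ¹} = 0. -/

import Mathlib

/-!
Once `E_n ⊇ {V ≤ V x_ℓ}`, redirecting the exits of `E_n` to `x_ℓ` can only lower `V`, so the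
projected generator inherits the drift condition and `∑ π̄_n V ≤ C₁ / C₂`. Hence the `π̄_n` are
tight, and by Tychonoff every cluster point `μ` of them in `ℝ^E` is a probability vector. Since
the redirected mass only adds to `x_ℓ`, each `π̄_n` is subinvariant for `Q` on `E_n`, and by Fatou
so is `μ`. The drift condition upgrades subinvariance of a finite measure to invariance (test it
against `(R - V)⁺`), and irreducibility makes invariant probability vectors unique (apply this to
`min μ π`). So `π̄_n → π` pointwise, and Scheffé's lemma gives convergence in `ℓ¹`.
-/

open Filter Topology

section Series

variable {E : Type*}

lemma hasSum_ite_notMem {α : Type*} [AddCommGroup α] [TopologicalSpace α] [IsTopologicalAddGroup α]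
    [DecidableEq E] {f : E → α} {a : α} (hf : HasSum f a) (S : Finset E) :
    HasSum (fun y => if y ∈ S then 0 else f y) (a - ∑ y ∈ S, f y) := by
  have hS : HasSum (fun y => if y ∈ S then f y else 0) (∑ y ∈ S, f y) := by
    simpa using hasSum_sum_of_ne_finset_zero (s := S) (f := fun y => if y ∈ S then f y else 0)
      fun y hy => if_neg hy
  convert hf.sub hS using 1
  funext y
  split_ifs <;> simp

lemma summable_and_tsum_le_of_tendsto {ι : Type*} {l : Filter ι} [l.NeBot] {f : ι → E → ℝ}
    {g : E → ℝ} {c : ι → ℝ} {c₀ : ℝ} (hf0 : ∀ᶠ i in l, ∀ x, 0 ≤ f i x)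
    (hf : ∀ᶠ i in l, Summable (f i) ∧ ∑' x, f i x ≤ c i)
    (hg : ∀ x, Tendsto (fun i => f i x) l (𝓝 (g x))) (hc : Tendsto c l (𝓝 c₀)) :
    Summable g ∧ ∑' x, g x ≤ c₀ := by
  have hg0 : 0 ≤ g := fun x => ge_of_tendsto (hg x) (hf0.mono fun i h => h x)
  have hfin : ∀ s : Finset E, ∑ x ∈ s, g x ≤ c₀ := fun s =>
    le_of_tendsto_of_tendsto (tendsto_finsetSum s fun x _ => hg x) hc <| by
      filter_upwards [hf0, hf] with i h0 h
      exact (h.1.sum_le_tsum s fun x _ => h0 x).trans h.2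
  exact ⟨summable_of_sum_le hg0 hfin, (summable_of_sum_le hg0 hfin).tsum_le_of_sum_le hfin⟩

lemma sub_div_le_sum_of_tsum_mul_le {p V : E → ℝ} {a C R : ℝ} {G : Finset E}
    (hV0 : ∀ x, 0 ≤ V x) (hp0 : ∀ x, 0 ≤ p x) (hp : HasSum p a)
    (hpV : Summable fun x => p x * V x) (hmom : ∑' x, p x * V x ≤ C) (hR : 0 < R)
    (hG : ∀ x ∉ G, R < V x) : a - C / R ≤ ∑ x ∈ G, p x := by
  classical
  have hGsum : HasSum (fun x => R * if x ∈ G then p x else 0) (R * ∑ x ∈ G, p x) := by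
    simpa using (hasSum_sum_of_ne_finset_zero (s := G) (f := fun x => if x ∈ G then p x else 0)
      fun x hx => if_neg hx).mul_left R
  have hpoint : ∀ x, R * p x ≤ (R * if x ∈ G then p x else 0) + p x * V x := by
    intro x
    by_cases hx : x ∈ G
    · simpa [hx] using mul_nonneg (hp0 x) (hV0 x)
    · simpa [hx, mul_comm] using mul_le_mul_of_nonneg_left (hG x hx).le (hp0 x)
  have hmarkov : R * a ≤ R * ∑ x ∈ G, p x + C :=
    (hasSum_le hpoint (hp.mul_left R) (hGsum.add hpV.hasSum)).trans (by linarith)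
  rw [sub_le_comm, le_div_iff₀ hR]
  linarith

lemma hasSum_one_of_tendsto {ι : Type*} {l : Filter ι} [l.NeBot] {p : ι → E → ℝ}
    {μ V : E → ℝ} {C : ℝ} (hV : ∀ c : ℝ, {x | V x ≤ c}.Finite) (hV0 : ∀ x, 0 ≤ V x)
    (hp0 : ∀ i x, 0 ≤ p i x) (hp : ∀ i, HasSum (p i) 1)
    (hpV : ∀ i, Summable fun x => p i x * V x) (hmom : ∀ᶠ i in l, ∑' x, p i x * V x ≤ C)
    (hlim : ∀ x, Tendsto (fun i => p i x) l (𝓝 (μ x))) : HasSum μ 1 := by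
  obtain ⟨hμ, hle⟩ := summable_and_tsum_le_of_tendsto (c := fun _ => 1)
    (Eventually.of_forall hp0)
    (Eventually.of_forall fun i => ⟨(hp i).summable, (hp i).tsum_eq.le⟩) hlim tendsto_const_nhds
  have hμ0 : ∀ x, 0 ≤ μ x := fun x => ge_of_tendsto' (hlim x) fun i => hp0 i x
  have htight : ∀ R > 0, 1 - C / R ≤ ∑' x, μ x := fun R hR =>
    calc 1 - C / R ≤ ∑ x ∈ (hV R).toFinset, μ x :=
          ge_of_tendsto (tendsto_finsetSum _ fun x _ => hlim x) <| hmom.mono fun i hi =>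
            sub_div_le_sum_of_tsum_mul_le hV0 (hp0 i) (hp i) (hpV i) hi hR
              fun x hx => lt_of_not_ge fun h => hx ((hV R).mem_toFinset.mpr h)
      _ ≤ ∑' x, μ x := hμ.sum_le_tsum _ fun x _ => hμ0 x
  have hge : 1 ≤ ∑' x, μ x := by
    have hlim1 : Tendsto (fun R : ℝ => 1 - C / R) atTop (𝓝 1) := by
      simpa using (tendsto_const_nhds (x := (1 : ℝ))).sub
        ((tendsto_const_nhds (x := C)).div_atTop tendsto_id)
    exact le_of_tendsto hlim1 ((eventually_gt_atTop 0).mono htight)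
  exact (le_antisymm hle hge) ▸ hμ.hasSum

lemma tendsto_tsum_abs_sub_of_tendsto {ι : Type*} {l : Filter ι} {p : ι → E → ℝ} {π : E → ℝ}
    {a : ℝ} (hπ0 : ∀ x, 0 ≤ π x) (hπ : HasSum π a) (hp0 : ∀ i x, 0 ≤ p i x)
    (hp : ∀ i, HasSum (p i) a) (hlim : ∀ x, Tendsto (fun i => p i x) l (𝓝 (π x))) :
    Tendsto (fun i => ∑' x, |π x - p i x|) l (𝓝 0) := by
  have hpos : ∀ i x, ‖max (π x - p i x) 0‖ ≤ π x := fun i x => by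
    rw [Real.norm_of_nonneg (le_max_right _ _)]
    exact max_le (by linarith [hp0 i x]) (hπ0 x)
  -- `|t| = 2 max t 0 - t`, and the `t`-part sums to `a - a = 0`.
  have habs : ∀ i, ∑' x, |π x - p i x| = 2 * ∑' x, max (π x - p i x) 0 := fun i => by
    have hmax : Summable fun x => max (π x - p i x) 0 :=
      .of_norm_bounded hπ.summable (hpos i)
    refine (((hmax.hasSum.mul_left 2).sub (hπ.sub (hp i))).congr_fun fun x => ?_).tsum_eq.trans
      (by simp)
    rcases le_total (π x - p i x) 0 with h | h
    · simp [abs_of_nonpos h, max_eq_right h]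
    · simp [abs_of_nonneg h, max_eq_left h]; ring
  have hpart : Tendsto (fun i => ∑' x, max (π x - p i x) 0) l (𝓝 0) := by
    simpa using tendsto_tsum_of_dominated_convergence hπ.summable
      (fun x => ((tendsto_const_nhds.sub (hlim x)).max tendsto_const_nhds))
      (Eventually.of_forall hpos)
  simpa [habs] using hpart.const_mul 2

end Series

lemma eventually_mem_of_monotone {E : Type*} {En : ℕ → Finset E} (hmono : Monotone En)
    (hcover : ∀ x : E, ∃ n, x ∈ En n) (x : E) : ∀ᶠ n in atTop, x ∈ En n :=
  let ⟨N, hN⟩ := hcover x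
  eventually_atTop.mpr ⟨N, fun _ hn => hmono hn hN⟩

namespace RateMatrix

variable {E : Type*} {Q : E → E → ℝ}

def IsInvariant (Q : E → E → ℝ) (m : E → ℝ) : Prop :=
  ∀ y, HasSum (fun x => Q x y * m x) 0

def IsSubinvariant (Q : E → E → ℝ) (m : E → ℝ) : Prop :=
  ∀ y, Summable (fun x => Q x y * m x) ∧ ∑' x, Q x y * m x ≤ 0

lemma neg_le_sum_sublevel_mul_sub {V : E → ℝ} {c R : ℝ} {F : Finset E}
    (hoff : ∀ x y, x ≠ y → 0 ≤ Q x y) (hQsum : ∀ x, Summable (Q x))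
    (hrow : ∀ x, ∑' y, Q x y = 0) (hc : 0 ≤ c) (hQVsum : ∀ x, Summable fun y => Q x y * V y)
    (hQV : ∀ x, ∑' y, Q x y * V y ≤ c) (hF : ∀ y, y ∈ F ↔ V y ≤ R) (x : E) :
    -c ≤ ∑ y ∈ F, Q x y * (R - V y) := by
  by_cases hx : x ∈ F
  · have hsum : Summable fun y => Q x y * (R - V y) := by
      simpa [mul_sub, mul_comm] using ((hQsum x).mul_left R).sub (hQVsum x)
    have htsum : ∑' y, Q x y * (R - V y) = -∑' y, Q x y * V y := by
      simp only [mul_sub]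
      rw [(hQsum x).mul_right R |>.tsum_sub (hQVsum x), tsum_mul_right, hrow x, zero_mul, zero_sub]
    have htail : ∑' y : ↑((F : Set E)ᶜ), Q x y * (R - V y) ≤ 0 := by
      refine tsum_nonpos fun ⟨y, hy⟩ => mul_nonpos_of_nonneg_of_nonpos
        (hoff x y fun h => hy (h ▸ hx)) ?_
      exact sub_nonpos.mpr (lt_of_not_ge fun h => hy ((hF y).mpr h)).le
    have := hsum.sum_add_tsum_compl (s := F)
    linarith [hQV x]
  · exact (neg_nonpos.mpr hc).trans (Finset.sum_nonneg fun y hy => mul_nonneg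
      (hoff x y fun h => hx (h ▸ hy)) (sub_nonneg.mpr ((hF y).mp hy)))

lemma IsSubinvariant.isInvariant {V m : E → ℝ} {c : ℝ}
    (hoff : ∀ x y, x ≠ y → 0 ≤ Q x y) (hQsum : ∀ x, Summable (Q x))
    (hrow : ∀ x, ∑' y, Q x y = 0) (hV : ∀ c : ℝ, {x | V x ≤ c}.Finite) (hc : 0 ≤ c)
    (hQVsum : ∀ x, Summable fun y => Q x y * V y) (hQV : ∀ x, ∑' y, Q x y * V y ≤ c)
    (hm0 : ∀ x, 0 ≤ m x) (hm : Summable m) (hsub : IsSubinvariant Q m) : IsInvariant Q m := by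
  classical
  intro y₀
  refine (hsub y₀).1.hasSum_iff.mpr (le_antisymm (hsub y₀).2 (not_lt.mp fun hneg => ?_))
  set s := ∑' x, Q x y₀ * m x
  set M := ∑' x, m x
  -- Test `m` against `(R - V)⁺`, with `R` so large that its value at `y₀` beats `c * M`.
  set R := V y₀ + (c * M + 1) / -s
  set F := (hV R).toFinset
  have hF : ∀ y, y ∈ F ↔ V y ≤ R := fun y => (hV R).mem_toFinset
  have hM : 0 ≤ M := tsum_nonneg hm0
  have hy₀ : y₀ ∈ F := (hF y₀).mpr (le_add_of_nonneg_right
    (div_nonneg (by positivity) (neg_nonneg.mpr hneg.le)))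
  have hswap : ∑' x, m x * ∑ y ∈ F, Q x y * (R - V y) =
      ∑ y ∈ F, (R - V y) * ∑' x, Q x y * m x := by
    simp_rw [Finset.mul_sum, ← tsum_mul_left]
    rw [← Summable.tsum_finsetSum fun y _ => ((hsub y).1.mul_left (R - V y))]
    exact tsum_congr fun x => Finset.sum_congr rfl fun y _ => by ring
  have hsummable : Summable fun x => m x * ∑ y ∈ F, Q x y * (R - V y) := by
    simp_rw [Finset.mul_sum]
    exact summable_sum fun y _ => ((hsub y).1.mul_left (R - V y)).congr fun x => by ring
  have hlow : -c * M ≤ ∑' x, m x * ∑ y ∈ F, Q x y * (R - V y) :=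
    calc -c * M = ∑' x, m x * -c := by rw [tsum_mul_right]; ring
      _ ≤ _ := (hm.mul_right (-c)).tsum_le_tsum (fun x => mul_le_mul_of_nonneg_left
          (neg_le_sum_sublevel_mul_sub hoff hQsum hrow hc hQVsum hQV hF x) (hm0 x)) hsummable
  have hup : ∑ y ∈ F, (R - V y) * ∑' x, Q x y * m x ≤ (R - V y₀) * s := by
    rw [← Finset.add_sum_erase F _ hy₀]
    exact add_le_of_nonpos_right (Finset.sum_nonpos fun y hy => mul_nonpos_of_nonneg_of_nonpos
      (sub_nonneg.mpr ((hF y).mp (Finset.mem_of_mem_erase hy))) (hsub y).2)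
  have hval : (R - V y₀) * s = -(c * M + 1) := by
    simp only [R, add_sub_cancel_left]
    field_simp [hneg.ne]
  linarith

lemma tsum_mul_le_zero_of_le {m m' : E → ℝ} {y : E} (hoff : ∀ x y, x ≠ y → 0 ≤ Q x y)
    (hm : HasSum (fun x => Q x y * m x) 0) (hm' : Summable fun x => Q x y * m' x)
    (hle : ∀ x, m' x ≤ m x) (hy : m' y = m y) : ∑' x, Q x y * m' x ≤ 0 :=
  hasSum_le (fun x => by
    rcases eq_or_ne x y with rfl | hxy
    · rw [hy]
    · exact mul_le_mul_of_nonneg_left (hle x) (hoff x y hxy)) hm'.hasSum hm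

lemma IsInvariant.isSubinvariant_min {μ π : E → ℝ} (hoff : ∀ x y, x ≠ y → 0 ≤ Q x y)
    (hμ : IsInvariant Q μ) (hπ : IsInvariant Q π) :
    IsSubinvariant Q fun x => min (μ x) (π x) := by
  intro y
  have hsum : Summable fun x => Q x y * min (μ x) (π x) :=
    .of_norm_bounded ((hμ y).summable.norm.add (hπ y).summable.norm) fun x => by
      simp only [norm_mul, ← mul_add]
      exact mul_le_mul_of_nonneg_left ((abs_min_le_max_abs_abs).trans
        (max_le_add_of_nonneg (abs_nonneg _) (abs_nonneg _))) (norm_nonneg _)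
  refine ⟨hsum, ?_⟩
  rcases min_choice (μ y) (π y) with h | h
  · exact tsum_mul_le_zero_of_le hoff (hμ y) hsum (fun x => min_le_left _ _) h
  · exact tsum_mul_le_zero_of_le hoff (hπ y) hsum (fun x => min_le_right _ _) h

lemma IsInvariant.eq_zero_of_eq_zero {d : E → ℝ} {a b : E} (hoff : ∀ x y, x ≠ y → 0 ≤ Q x y)
    (hd : IsInvariant Q d) (hd0 : ∀ x, 0 ≤ d x) (hb : d b = 0) (hab : a ≠ b) (hQ : 0 < Q a b) :
    d a = 0 := by
  have hterms : (fun x => Q x b * d x) = 0 := (hasSum_zero_iff_of_nonneg fun x => by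
    rcases eq_or_ne x b with rfl | hxb
    · simp [hb]
    · exact mul_nonneg (hoff x b hxb) (hd0 x)).mp (hd b)
  exact (mul_eq_zero.mp (congrFun hterms a)).resolve_left hQ.ne'

lemma IsInvariant.eq_zero_of_irreducible {d : E → ℝ} {b : E} (hoff : ∀ x y, x ≠ y → 0 ≤ Q x y)
    (hirr : ∀ x y : E, Relation.ReflTransGen (fun a b => a ≠ b ∧ 0 < Q a b) x y)
    (hd : IsInvariant Q d) (hd0 : ∀ x, 0 ≤ d x) (hb : d b = 0) (a : E) : d a = 0 :=
  (hirr a b).head_induction_on hb fun ⟨hne, hQ⟩ _ hc => hd.eq_zero_of_eq_zero hoff hd0 hc hne hQ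

lemma IsInvariant.le_of_hasSum {V μ π : E → ℝ} {a c : ℝ}
    (hoff : ∀ x y, x ≠ y → 0 ≤ Q x y) (hQsum : ∀ x, Summable (Q x))
    (hrow : ∀ x, ∑' y, Q x y = 0)
    (hirr : ∀ x y : E, Relation.ReflTransGen (fun a b => a ≠ b ∧ 0 < Q a b) x y)
    (hV : ∀ c : ℝ, {x | V x ≤ c}.Finite) (hc : 0 ≤ c)
    (hQVsum : ∀ x, Summable fun y => Q x y * V y) (hQV : ∀ x, ∑' y, Q x y * V y ≤ c)
    (hμ : IsInvariant Q μ) (hπ : IsInvariant Q π) (hμ0 : ∀ x, 0 ≤ μ x) (hπ0 : ∀ x, 0 ≤ π x)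
    (hμa : HasSum μ a) (hπa : HasSum π a) (x : E) : μ x ≤ π x := by
  set w := fun x => min (μ x) (π x)
  have hw : IsInvariant Q w :=
    (hμ.isSubinvariant_min hoff hπ).isInvariant hoff hQsum hrow hV hc hQVsum hQV
      (fun x => le_min (hμ0 x) (hπ0 x))
      (hπa.summable.of_nonneg_of_le (fun x => le_min (hμ0 x) (hπ0 x)) fun x => min_le_right _ _)
  -- `μ - min μ π = (μ - π)⁺` is invariant, so it vanishes everywhere or nowhere.
  have hd : IsInvariant Q (μ - w) := fun y => by
    simpa [mul_sub] using (hμ y).sub (hw y)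
  by_contra! hx
  have hlt : ∀ b, π b < μ b := fun b => by
    by_contra! hb
    have := hd.eq_zero_of_irreducible hoff hirr (fun x => sub_nonneg.mpr (min_le_left _ _))
      (b := b) (by simp [w, min_eq_left hb]) x
    simp [w, min_eq_right hx.le] at this
    linarith
  exact (hπa.summable.tsum_lt_tsum (fun b => (hlt b).le) (hlt x) hμa.summable).ne
    (hπa.tsum_eq.trans hμa.tsum_eq.symm)

lemma isSubinvariant_of_tendsto {ι : Type*} {l : Filter ι} [l.NeBot] {p : ι → E → ℝ}
    {μ : E → ℝ} (hoff : ∀ x y, x ≠ y → 0 ≤ Q x y) (hp0 : ∀ i x, 0 ≤ p i x)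
    (hpQ : ∀ i y, Summable fun x => Q x y * p i x)
    (hsub : ∀ y, ∀ᶠ i in l, ∑' x, Q x y * p i x ≤ 0)
    (hlim : ∀ x, Tendsto (fun i => p i x) l (𝓝 (μ x))) : IsSubinvariant Q μ := by
  classical
  intro y
  -- Fatou's lemma applies to the nonnegative off-diagonal terms of column `y`.
  set off : (E → ℝ) → E → ℝ := fun m x => if x = y then 0 else Q x y * m x
  obtain ⟨hoffsum, hofftsum⟩ := summable_and_tsum_le_of_tendsto (f := fun i => off (p i))
    (g := off μ) (c := fun i => -(Q y y * p i y))
    (Eventually.of_forall fun i x => by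
      by_cases hxy : x = y
      · simp [off, hxy]
      · simpa [off, hxy] using mul_nonneg (hoff x y hxy) (hp0 i x))
    ((hsub y).mono fun i hi =>
      have hoffi := hasSum_ite_sub_hasSum (hpQ i y).hasSum y
      ⟨hoffi.summable, hoffi.tsum_eq.trans_le (by linarith)⟩)
    (fun x => by
      by_cases hxy : x = y
      · simp [off, hxy]
      · simpa [off, hxy] using (hlim x).const_mul (Q x y))
    ((hlim y).const_mul (Q y y)).neg
  have hcol : HasSum (fun x => Q x y * μ x) (∑' x, off μ x + Q y y * μ y) :=
    (hoffsum.hasSum.add (hasSum_ite_eq y _)).congr_fun fun x => by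
      by_cases hxy : x = y <;> simp [off, hxy]
  exact ⟨hcol.summable, hcol.tsum_eq.le.trans (by linarith)⟩

theorem tendsto_of_tight_of_subinvariant {ι : Type*} {l : Filter ι} {p : ι → E → ℝ}
    {π V : E → ℝ} {c C : ℝ}
    (hoff : ∀ x y, x ≠ y → 0 ≤ Q x y) (hQsum : ∀ x, Summable (Q x))
    (hrow : ∀ x, ∑' y, Q x y = 0)
    (hirr : ∀ x y : E, Relation.ReflTransGen (fun a b => a ≠ b ∧ 0 < Q a b) x y)
    (hV : ∀ c : ℝ, {x | V x ≤ c}.Finite) (hV0 : ∀ x, 0 ≤ V x) (hc : 0 ≤ c)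
    (hQVsum : ∀ x, Summable fun y => Q x y * V y) (hQV : ∀ x, ∑' y, Q x y * V y ≤ c)
    (hπ0 : ∀ x, 0 ≤ π x) (hπ : HasSum π 1) (hπinv : IsInvariant Q π)
    (hp0 : ∀ i x, 0 ≤ p i x) (hp : ∀ i, HasSum (p i) 1)
    (hpV : ∀ i, Summable fun x => p i x * V x) (hmom : ∀ᶠ i in l, ∑' x, p i x * V x ≤ C)
    (hpQ : ∀ i y, Summable fun x => Q x y * p i x)
    (hsub : ∀ y, ∀ᶠ i in l, ∑' x, Q x y * p i x ≤ 0) : Tendsto p l (𝓝 π) := by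
  have hK : IsCompact (Set.univ.pi fun _ : E => Set.Icc (0 : ℝ) 1) :=
    isCompact_univ_pi fun _ => isCompact_Icc
  refine hK.tendsto_nhds_of_unique_mapClusterPt
    (Eventually.of_forall fun i x _ => ⟨hp0 i x, le_hasSum (hp i) x fun y _ => hp0 i y⟩)
    fun μ _ hμ => ?_
  obtain ⟨u, hu, hlim⟩ := mapClusterPt_iff_ultrafilter.mp hμ
  replace hlim := tendsto_pi_nhds.mp hlim
  have hμ0 : ∀ x, 0 ≤ μ x := fun x => ge_of_tendsto' (hlim x) fun i => hp0 i x
  have hμ1 : HasSum μ 1 := hasSum_one_of_tendsto hV hV0 hp0 hp hpV (hu hmom) hlim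
  have hμinv : IsInvariant Q μ :=
    (isSubinvariant_of_tendsto hoff hp0 hpQ (fun y => hu (hsub y)) hlim).isInvariant
      hoff hQsum hrow hV hc hQVsum hQV hμ0 hμ1.summable
  funext x
  exact le_antisymm
    (hμinv.le_of_hasSum hoff hQsum hrow hirr hV hc hQVsum hQV hπinv hμ0 hπ0 hμ1 hπ x)
    (hπinv.le_of_hasSum hoff hQsum hrow hirr hV hc hQVsum hQV hμinv hπ0 hμ0 hπ hμ1 x)

section Projection

variable [DecidableEq E]

noncomputable def exitRate (Q : E → E → ℝ) (S : Finset E) (x : E) : ℝ :=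
  ∑' z, if z ∈ S then 0 else Q x z

-- The paper's `Q̄_n` for `S = E_n`.
noncomputable def projectedRate (Q : E → E → ℝ) (S : Finset E) (xl x y : E) : ℝ :=
  Q x y + if y = xl then exitRate Q S x else 0

variable {S : Finset E} {xl : E}

lemma exitRate_nonneg (hoff : ∀ x y, x ≠ y → 0 ≤ Q x y) {x : E} (hx : x ∈ S) :
    0 ≤ exitRate Q S x :=
  tsum_nonneg fun z => by
    split_ifs with hz
    · exact le_rfl
    · exact hoff x z fun h => hz (h ▸ hx)

lemma sum_projectedRate_mul (hxl : xl ∈ S) (f : E → ℝ) (x : E) :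
    ∑ y ∈ S, projectedRate Q S xl x y * f y = ∑ y ∈ S, Q x y * f y + exitRate Q S x * f xl := by
  simp [projectedRate, add_mul, Finset.sum_add_distrib, ite_mul, hxl]

lemma sum_projectedRate_mul_le {V : E → ℝ} (hoff : ∀ x y, x ≠ y → 0 ≤ Q x y)
    (hQsum : ∀ x, Summable (Q x)) (hQVsum : ∀ x, Summable fun y => Q x y * V y)
    (hxl : xl ∈ S) (hVS : ∀ z ∉ S, V xl ≤ V z) {x : E} (hx : x ∈ S) :
    ∑ y ∈ S, projectedRate Q S xl x y * V y ≤ ∑' y, Q x y * V y := by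
  have hexit : HasSum (fun y => (if y ∈ S then 0 else Q x y) * V xl) (exitRate Q S x * V xl) :=
    (hasSum_ite_notMem (hQsum x).hasSum S).summable.hasSum.mul_right (V xl)
  have hle := hasSum_le (fun y => by
      split_ifs with hy
      · simp
      · exact mul_le_mul_of_nonneg_left (hVS y hy) (hoff x y fun h => hy (h ▸ hx)))
    hexit (hasSum_ite_notMem (hQVsum x).hasSum S)
  rw [sum_projectedRate_mul hxl]
  linarith

lemma mul_tsum_mul_le_of_projected_stationary {V p : E → ℝ} {C₁ C₂ : ℝ}
    (hoff : ∀ x y, x ≠ y → 0 ≤ Q x y) (hQsum : ∀ x, Summable (Q x))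
    (hQVsum : ∀ x, Summable fun y => Q x y * V y)
    (hdrift : ∀ x, ∑' y, Q x y * V y ≤ C₁ - C₂ * V x)
    (hxl : xl ∈ S) (hVS : ∀ z ∉ S, V xl ≤ V z) (hp0 : ∀ x, 0 ≤ p x)
    (hsupp : ∀ x ∉ S, p x = 0) (hp1 : ∑ x ∈ S, p x = 1)
    (hstat : ∀ y ∈ S, ∑ x ∈ S, projectedRate Q S xl x y * p x = 0) :
    C₂ * ∑' x, p x * V x ≤ C₁ := by
  have hzero : ∑ x ∈ S, p x * ∑ y ∈ S, projectedRate Q S xl x y * V y = 0 := by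
    simp_rw [Finset.mul_sum]
    rw [Finset.sum_comm]
    refine Finset.sum_eq_zero fun y hy => ?_
    rw [← zero_mul (V y), ← hstat y hy, Finset.sum_mul]
    exact Finset.sum_congr rfl fun x _ => by ring
  have hle : 0 ≤ ∑ x ∈ S, p x * (C₁ - C₂ * V x) := hzero ▸ Finset.sum_le_sum fun x hx =>
    mul_le_mul_of_nonneg_left
      ((sum_projectedRate_mul_le hoff hQsum hQVsum hxl hVS hx).trans (hdrift x)) (hp0 x)
  have hexpand : ∑ x ∈ S, p x * (C₁ - C₂ * V x) =
      C₁ * ∑ x ∈ S, p x - C₂ * ∑ x ∈ S, p x * V x := by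
    rw [Finset.mul_sum, Finset.mul_sum, ← Finset.sum_sub_distrib]
    exact Finset.sum_congr rfl fun x _ => by ring
  rw [hexpand, hp1] at hle
  rw [tsum_eq_sum fun x hx => by rw [hsupp x hx, zero_mul]]
  linarith

lemma tsum_mul_le_zero_of_projected_stationary {p : E → ℝ} {y : E}
    (hoff : ∀ x y, x ≠ y → 0 ≤ Q x y) (hp0 : ∀ x, 0 ≤ p x) (hsupp : ∀ x ∉ S, p x = 0)
    (hstat : ∑ x ∈ S, projectedRate Q S xl x y * p x = 0) : ∑' x, Q x y * p x ≤ 0 := by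
  have hredirect : 0 ≤ ∑ x ∈ S, (if y = xl then exitRate Q S x else 0) * p x :=
    Finset.sum_nonneg fun x hx => mul_nonneg
      (by split_ifs; exacts [exitRate_nonneg hoff hx, le_rfl]) (hp0 x)
  rw [tsum_eq_sum fun x hx => by rw [hsupp x hx, mul_zero]]
  simp only [projectedRate, add_mul, Finset.sum_add_distrib] at hstat
  linarith

end Projection

end RateMatrix

open RateMatrix

theorem sFSP_l1_convergence_general {E : Type*} [DecidableEq E]
    (Q : E → E → ℝ)
    (hoff : ∀ x y, x ≠ y → 0 ≤ Q x y)
    (hQsum : ∀ x, Summable (Q x))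
    (hrow : ∀ x, ∑' y, Q x y = 0)
    (hirr : ∀ x y : E, Relation.ReflTransGen (fun a b => a ≠ b ∧ 0 < Q a b) x y)
    (V : E → ℝ) (hV1 : ∀ x, 1 ≤ V x)
    (hnormlike : ∀ c : ℝ, {x : E | V x ≤ c}.Finite)
    (C₁ C₂ : ℝ) (hC₁ : 0 < C₁) (hC₂ : 0 < C₂)
    (hQVsum : ∀ x, Summable fun y => Q x y * V y)
    (hdrift : ∀ x, ∑' y, Q x y * V y ≤ C₁ - C₂ * V x)
    -- the stationary distribution of the original chain
    (π : E → ℝ) (hπpos : ∀ x, 0 ≤ π x) (hπsum : Summable π) (hπ1 : ∑' x, π x = 1)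
    (hπQsum : ∀ y, Summable fun x => Q x y * π x)
    (hπstat : ∀ y, ∑' x, Q x y * π x = 0)
    -- the increasing family of finite truncations and the designated state
    (En : ℕ → Finset E) (hmono : Monotone En) (hcover : ∀ x : E, ∃ n, x ∈ En n)
    (xl : E) (hxl : xl ∈ En 0)
    -- stationary distributions of the projected chains `Q̄_n`
    (πbar : ℕ → E → ℝ)
    (hπbar_supp : ∀ n x, x ∉ En n → πbar n x = 0)
    (hπbar_pos : ∀ n x, 0 ≤ πbar n x)
    (hπbar_1 : ∀ n, ∑ x ∈ En n, πbar n x = 1)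
    (hπbar_stat : ∀ n, ∀ y ∈ En n,
      ∑ x ∈ En n,
        (Q x y + (if y = xl then ∑' z, (if z ∈ En n then 0 else Q x z) else 0)) *
          πbar n x = 0) :
    Filter.Tendsto (fun n => ∑' x, |π x - πbar n x|) Filter.atTop (nhds 0) := by
  have hV0 : ∀ x, 0 ≤ V x := fun x => zero_le_one.trans (hV1 x)
  have hQV : ∀ x, ∑' y, Q x y * V y ≤ C₁ := fun x =>
    (hdrift x).trans (sub_le_self _ (mul_nonneg hC₂.le (hV0 x)))
  have hπ : HasSum π 1 := hπ1 ▸ hπsum.hasSum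
  have hπbar : ∀ n, HasSum (πbar n) 1 := fun n =>
    hπbar_1 n ▸ hasSum_sum_of_ne_finset_zero (hπbar_supp n)
  have hmom : ∀ᶠ n in atTop, ∑' x, πbar n x * V x ≤ C₁ / C₂ := by
    filter_upwards [(hnormlike (V xl)).eventually_all.mpr fun z _ =>
      eventually_mem_of_monotone hmono hcover z] with n hn
    exact (le_div_iff₀' hC₂).mpr <| mul_tsum_mul_le_of_projected_stationary hoff hQsum hQVsum
      hdrift (hmono n.zero_le hxl) (fun z hz => not_lt.mp fun h => hz (hn z h.le))
      (hπbar_pos n) (hπbar_supp n) (hπbar_1 n) (hπbar_stat n)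
  have hsub : ∀ y, ∀ᶠ n in atTop, ∑' x, Q x y * πbar n x ≤ 0 := fun y =>
    (eventually_mem_of_monotone hmono hcover y).mono fun n hy =>
      tsum_mul_le_zero_of_projected_stationary hoff (hπbar_pos n) (hπbar_supp n)
        (hπbar_stat n y hy)
  have hlim : Tendsto πbar atTop (𝓝 π) :=
    tendsto_of_tight_of_subinvariant hoff hQsum hrow hirr hnormlike hV0 hC₁.le hQVsum hQV
      hπpos hπ (fun y => hπstat y ▸ (hπQsum y).hasSum) hπbar_pos hπbar
      (fun n => summable_of_ne_finset_zero fun x hx => by rw [hπbar_supp n x hx, zero_mul])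
      hmom
      (fun n y => summable_of_ne_finset_zero fun x hx => by rw [hπbar_supp n x hx, mul_zero])
      hsub
  exact tendsto_tsum_abs_sub_of_tendsto hπpos hπ hπbar_pos hπbar (tendsto_pi_nhds.mp hlim)

/-- sFSP convergence (Theorem 3.1(B)): for an irreducible CTMC on a countable state
space with transition rate matrix `Q` admitting a norm-like Foster–Lyapunov function
`V ≥ 1` with `ℚV ≤ C₁ − C₂V`, if `(E_n)` is an increasing sequence of finite
truncations covering the state space, `x_ℓ ∈ E₁` a designated state, and `π̄_n` the
stationary distribution of the projected chain `Q̄_n` obtained by redirecting all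
outgoing transitions of `E_n` to `x_ℓ`, then `‖π − π̄_n‖_{ℓ¹} → 0`. -/
theorem sFSP_l1_convergence {E : Type*} [Countable E] [DecidableEq E]
    (Q : E → E → ℝ)
    (hoff : ∀ x y, x ≠ y → 0 ≤ Q x y)
    (hdiag : ∀ x, Q x x ≤ 0)
    (hQsum : ∀ x, Summable (Q x))
    (hrow : ∀ x, ∑' y, Q x y = 0)
    (hirr : ∀ x y : E, Relation.ReflTransGen (fun a b => a ≠ b ∧ 0 < Q a b) x y)
    (V : E → ℝ) (hV1 : ∀ x, 1 ≤ V x)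
    (hnormlike : ∀ c : ℝ, {x : E | V x ≤ c}.Finite)
    (C₁ C₂ : ℝ) (hC₁ : 0 < C₁) (hC₂ : 0 < C₂)
    (hQVsum : ∀ x, Summable fun y => Q x y * V y)
    (hdrift : ∀ x, ∑' y, Q x y * V y ≤ C₁ - C₂ * V x)
    -- the stationary distribution of the original chain
    (π : E → ℝ) (hπpos : ∀ x, 0 ≤ π x) (hπsum : Summable π) (hπ1 : ∑' x, π x = 1)
    (hπQsum : ∀ y, Summable fun x => Q x y * π x)
    (hπstat : ∀ y, ∑' x, Q x y * π x = 0)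
    -- the increasing family of finite truncations and the designated state
    (En : ℕ → Finset E) (hmono : Monotone En) (hcover : ∀ x : E, ∃ n, x ∈ En n)
    (xl : E) (hxl : xl ∈ En 0)
    -- stationary distributions of the projected chains `Q̄_n`
    (πbar : ℕ → E → ℝ)
    (hπbar_supp : ∀ n x, x ∉ En n → πbar n x = 0)
    (hπbar_pos : ∀ n x, 0 ≤ πbar n x)
    (hπbar_1 : ∀ n, ∑ x ∈ En n, πbar n x = 1)
    (hπbar_stat : ∀ n, ∀ y ∈ En n,
      ∑ x ∈ En n,
        (Q x y + (if y = xl then ∑' z, (if z ∈ En n then 0 else Q x z) else 0)) *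
          πbar n x = 0) :
    Filter.Tendsto (fun n => ∑' x, |π x - πbar n x|) Filter.atTop (nhds 0) :=
  sFSP_l1_convergence_general Q hoff hQsum hrow hirr V hV1 hnormlike C₁ C₂ hC₁ hC₂ hQVsum hdrift π
    hπpos hπsum hπ1 hπQsum hπstat En hmono hcover xl hxl πbar hπbar_supp hπbar_pos hπbar_1
    hπbar_stat
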